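/- For every τ in the upper half-plane ℍ: θ[0;0](0,τ)·θ[0;1](0,τ)·θ[1;0](0,τ)²·θ[1;1/2](0,τ)² = 4·θ[0;0](0,4τ)·θ[1;0](0,4τ)·θ[0;1](0,4τ)²·( θ[0;0](0,4τ)² - θ[1;0](0,4τ)² ). -/

import Mathlib

open Complex

/-- The theta function with characteristics `θ[ε; ε'](ζ, τ)`. -/
noncomputable def thetaChar (e e' : ℝ) (z τ : ℂ) : ℂ :=
  ∑' n : ℤ, Complex.exp (2 * Real.pi * I *
    ((1/2) * ((n : ℂ) + (e : ℂ)/2)^2 * τ + ((n : ℂ) + (e : ℂ)/2) * (z + (e' : ℂ)/2)))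

/-- The derivative theta constant `θ'[ε; ε'](0, τ) = ∂θ[ε;ε'](ζ,τ)/∂ζ |_{ζ=0}`. -/
noncomputable def thetaCharDeriv (e e' : ℝ) (τ : ℂ) : ℂ :=
  deriv (fun z => thetaChar e e' z τ) 0

/-!
Write `θ(τ; a, b) = ∑ₙ exp(πi(τ(n+a)² + 2(n+a)b))`, so that `θ[ε;ε'](0,τ) = θ(τ; ε/2, ε'/2)`.
Substituting `(m, n) = (j + k, j - k)` or `(j + k + 1, j - k)` in the double series of a product
gives the duplication formula
`θ(τ; a, b) θ(τ; a', b') = θ(2τ; (a+a')/2, b+b') θ(2τ; (a-a')/2, b-b')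
  + θ(2τ; (a+a'+1)/2, b+b') θ(2τ; (a-a'+1)/2, b-b')`.
Together with the quasi-periodicity of `θ` in `a` and `b` and the vanishing of `θ(τ; 1/2, 1/2)`,
it yields, for `θ₂, θ₃, θ₄ = θ[1;0], θ[0;0], θ[0;1]`, the classical identities
`θ₃θ₄ = θ₄(2·)²`, `θ₂² = 2θ₂(2·)θ₃(2·)`, `θ₄² = θ₃(2·)² - θ₂(2·)²` and
`θ[1;1/2]² = θ₄(2·)θ₂(2·)`; applying them at `τ` and then at `2τ`
turns the left-hand side into the right-hand side.
-/

noncomputable def thetaConstTerm (τ : ℂ) (a b : ℝ) (n : ℤ) : ℂ :=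
  cexp (Real.pi * I * (τ * ((n : ℂ) + a) ^ 2 + 2 * ((n : ℂ) + a) * b))

noncomputable def thetaConst (τ : ℂ) (a b : ℝ) : ℂ := ∑' n : ℤ, thetaConstTerm τ a b n

theorem thetaChar_zero_eq_thetaConst (e e' : ℝ) (τ : ℂ) :
    thetaChar e e' 0 τ = thetaConst τ (e / 2) (e' / 2) := by
  refine tsum_congr fun n => congrArg cexp ?_
  push_cast
  ring

section Term

variable (τ : ℂ) (a b : ℝ)

theorem thetaConstTerm_eq_mul_jacobiTheta₂_term (n : ℤ) :
    thetaConstTerm τ a b n = cexp (Real.pi * I * τ * a ^ 2 + 2 * Real.pi * I * a * b) *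
      jacobiTheta₂_term n (a * τ + b) τ := by
  rw [thetaConstTerm, jacobiTheta₂_term, ← Complex.exp_add]
  ring_nf

theorem summable_norm_thetaConstTerm (hτ : 0 < τ.im) :
    Summable fun n => ‖thetaConstTerm τ a b n‖ := by
  refine summable_norm_iff.mpr <| Summable.congr ?_ fun n =>
    (thetaConstTerm_eq_mul_jacobiTheta₂_term τ a b n).symm
  exact ((summable_jacobiTheta₂_term_iff (a * τ + b) τ).mpr hτ).mul_left _

theorem thetaConstTerm_add_one_left (n : ℤ) :
    thetaConstTerm τ (a + 1) b n = thetaConstTerm τ a b (n + 1) := by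
  rw [thetaConstTerm, thetaConstTerm]
  push_cast
  ring_nf

theorem thetaConstTerm_add_one_right (n : ℤ) :
    thetaConstTerm τ a (b + 1) n = cexp (2 * Real.pi * I * a) * thetaConstTerm τ a b n := by
  rw [thetaConstTerm, thetaConstTerm, ← Complex.exp_add, ← mul_one (cexp (_ + _)),
    ← Complex.exp_int_mul_two_pi_mul_I n, ← Complex.exp_add]
  push_cast
  ring_nf

theorem thetaConstTerm_add_mul_sub (a' b' : ℝ) (j k : ℤ) :
    thetaConstTerm τ a b (j + k) * thetaConstTerm τ a' b' (j - k) =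
      thetaConstTerm (2 * τ) ((a + a') / 2) (b + b') j *
        thetaConstTerm (2 * τ) ((a - a') / 2) (b - b') k := by
  simp only [thetaConstTerm, ← Complex.exp_add]
  push_cast
  ring_nf

end Term

def intProdParityEquiv : (ℤ × ℤ) ⊕ (ℤ × ℤ) ≃ ℤ × ℤ where
  toFun
    | .inl (j, k) => (j + k, j - k)
    | .inr (j, k) => (j + k + 1, j - k)
  invFun p :=
    if (p.1 - p.2) % 2 = 0 then .inl ((p.1 + p.2) / 2, (p.1 - p.2) / 2)
    else .inr ((p.1 + p.2 - 1) / 2, (p.1 - p.2 - 1) / 2)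
  left_inv := by
    rintro (⟨j, k⟩ | ⟨j, k⟩) <;> dsimp only
    · rw [if_pos (by omega)]
      congr 2 <;> omega
    · rw [if_neg (by omega)]
      congr 2 <;> omega
  right_inv := by
    rintro ⟨m, n⟩
    dsimp only
    split_ifs <;> ext <;> dsimp only <;> omega

theorem tsum_int_prod_eq_add {E : Type*} [NormedAddCommGroup E] [CompleteSpace E]
    {F : ℤ × ℤ → E} (hF : Summable F) :
    ∑' p, F p =
      ∑' p : ℤ × ℤ, F (p.1 + p.2, p.1 - p.2) + ∑' p : ℤ × ℤ, F (p.1 + p.2 + 1, p.1 - p.2) := by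
  have hF' := intProdParityEquiv.summable_iff.mpr hF
  rw [← intProdParityEquiv.tsum_eq]
  exact Summable.tsum_sum (f := fun c => F (intProdParityEquiv c))
    (hF'.comp_injective Sum.inl_injective) (hF'.comp_injective Sum.inr_injective)

theorem thetaConst_mul_thetaConst {τ : ℂ} (hτ : 0 < τ.im) (a b a' b' : ℝ) :
    thetaConst τ a b * thetaConst τ a' b' =
      thetaConst (2 * τ) ((a + a') / 2) (b + b') * thetaConst (2 * τ) ((a - a') / 2) (b - b') +
      thetaConst (2 * τ) ((a + 1 + a') / 2) (b + b') *
        thetaConst (2 * τ) ((a + 1 - a') / 2) (b - b') := by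
  have h2τ : 0 < (2 * τ).im := by norm_num [hτ]
  have hdiag (a : ℝ) :
      ∑' p : ℤ × ℤ, thetaConstTerm τ a b (p.1 + p.2) * thetaConstTerm τ a' b' (p.1 - p.2) =
        thetaConst (2 * τ) ((a + a') / 2) (b + b') *
          thetaConst (2 * τ) ((a - a') / 2) (b - b') := by
    rw [thetaConst, thetaConst, tsum_mul_tsum_of_summable_norm
      (summable_norm_thetaConstTerm _ _ _ h2τ) (summable_norm_thetaConstTerm _ _ _ h2τ)]
    exact tsum_congr fun p => thetaConstTerm_add_mul_sub τ a b a' b' p.1 p.2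
  have h := summable_norm_thetaConstTerm τ a b hτ
  have h' := summable_norm_thetaConstTerm τ a' b' hτ
  rw [thetaConst, thetaConst, tsum_mul_tsum_of_summable_norm h h',
    tsum_int_prod_eq_add (summable_mul_of_summable_norm (f := thetaConstTerm τ a b) h h'),
    ← hdiag, ← hdiag]
  -- the odd part of the double series is the even part with `a` shifted by `1`
  simp only [thetaConstTerm_add_one_left]

section Periodicity

variable (τ : ℂ) (a b : ℝ)

theorem thetaConst_add_one_left : thetaConst τ (a + 1) b = thetaConst τ a b := by
  simp only [thetaConst, thetaConstTerm_add_one_left]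
  exact (Equiv.addRight 1).tsum_eq (thetaConstTerm τ a b)

theorem thetaConst_add_one_right :
    thetaConst τ a (b + 1) = cexp (2 * Real.pi * I * a) * thetaConst τ a b := by
  simp only [thetaConst, thetaConstTerm_add_one_right, tsum_mul_left]

theorem thetaConst_zero_add_one_right : thetaConst τ 0 (b + 1) = thetaConst τ 0 b := by
  simp [thetaConst_add_one_right]

theorem thetaConst_half_add_one_right :
    thetaConst τ (1 / 2) (b + 1) = -thetaConst τ (1 / 2) b := by
  rw [thetaConst_add_one_right]
  push_cast
  rw [show 2 * Real.pi * I * (1 / 2) = Real.pi * I by ring, exp_pi_mul_I, neg_one_mul]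

end Periodicity

theorem thetaConstTerm_half_half_neg_one_sub (τ : ℂ) (n : ℤ) :
    thetaConstTerm τ (1 / 2) (1 / 2) (-1 - n) = -thetaConstTerm τ (1 / 2) (1 / 2) n := by
  calc thetaConstTerm τ (1 / 2) (1 / 2) (-1 - n)
      = cexp ((-1 - n : ℤ) * (2 * Real.pi * I)) * (cexp (Real.pi * I) *
          thetaConstTerm τ (1 / 2) (1 / 2) n) := by
        rw [thetaConstTerm, thetaConstTerm, ← Complex.exp_add, ← Complex.exp_add]
        congr 1
        push_cast
        ring
    _ = -thetaConstTerm τ (1 / 2) (1 / 2) n := by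
        rw [exp_int_mul_two_pi_mul_I, exp_pi_mul_I]
        ring

theorem thetaConst_half_half (τ : ℂ) : thetaConst τ (1 / 2) (1 / 2) = 0 := by
  have h := (Equiv.subLeft (-1 : ℤ)).tsum_eq (thetaConstTerm τ (1 / 2) (1 / 2))
  simp only [Equiv.subLeft_apply, thetaConstTerm_half_half_neg_one_sub, tsum_neg] at h
  rw [thetaConst]
  linear_combination -h / 2

local notation "θ₂" => thetaChar 1 0 0
local notation "θ₃" => thetaChar 0 0 0
local notation "θ₄" => thetaChar 0 1 0

section Duplication

variable {τ : ℂ}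

theorem theta₃_mul_theta₄ (hτ : 0 < τ.im) : θ₃ τ * θ₄ τ = θ₄ (2 * τ) ^ 2 := by
  have h := thetaConst_mul_thetaConst hτ 0 0 0 (1 / 2)
  have hneg := thetaConst_zero_add_one_right (2 * τ) (-(1 / 2))
  simp only [thetaChar_zero_eq_thetaConst]
  norm_num at h hneg ⊢
  rw [h, ← hneg, thetaConst_half_half]
  ring

theorem theta₂_sq (hτ : 0 < τ.im) : θ₂ τ ^ 2 = 2 * θ₂ (2 * τ) * θ₃ (2 * τ) := by
  have h := thetaConst_mul_thetaConst hτ (1 / 2) 0 (1 / 2) 0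
  have hone := thetaConst_add_one_left (2 * τ) 0 0
  simp only [thetaChar_zero_eq_thetaConst]
  norm_num at h hone ⊢
  rw [sq, h, hone]
  ring

theorem theta₄_sq (hτ : 0 < τ.im) : θ₄ τ ^ 2 = θ₃ (2 * τ) ^ 2 - θ₂ (2 * τ) ^ 2 := by
  have h := thetaConst_mul_thetaConst hτ 0 (1 / 2) 0 (1 / 2)
  have hzero := thetaConst_zero_add_one_right (2 * τ) 0
  have hhalf := thetaConst_half_add_one_right (2 * τ) 0
  simp only [thetaChar_zero_eq_thetaConst]
  norm_num at h hzero hhalf ⊢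
  rw [sq, h, hzero, hhalf]
  ring

theorem thetaChar_one_half_sq (hτ : 0 < τ.im) :
    thetaChar 1 (1 / 2) 0 τ ^ 2 = θ₄ (2 * τ) * θ₂ (2 * τ) := by
  have h := thetaConst_mul_thetaConst hτ (1 / 2) (1 / 4) (1 / 2) (1 / 4)
  have hone := thetaConst_add_one_left (2 * τ) 0 (1 / 2)
  simp only [thetaChar_zero_eq_thetaConst]
  norm_num at h hone ⊢
  rw [sq, h, hone, thetaConst_half_half]
  ring

end Duplication

theorem theta_product_identity (τ : ℂ) (hτ : 0 < τ.im) :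
    thetaChar 0 0 0 τ * thetaChar 0 1 0 τ *
      thetaChar 1 0 0 τ ^ 2 * thetaChar 1 (1/2) 0 τ ^ 2 =
    4 * thetaChar 0 0 0 (4*τ) * thetaChar 1 0 0 (4*τ) * thetaChar 0 1 0 (4*τ) ^ 2 *
      (thetaChar 0 0 0 (4*τ) ^ 2 - thetaChar 1 0 0 (4*τ) ^ 2) := by
  have h2τ : 0 < (2 * τ).im := by norm_num [hτ]
  have h4τ : 2 * (2 * τ) = 4 * τ := by ring
  calc θ₃ τ * θ₄ τ * θ₂ τ ^ 2 * thetaChar 1 (1 / 2) 0 τ ^ 2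
      = θ₄ (2 * τ) ^ 2 * (2 * θ₂ (2 * τ) * θ₃ (2 * τ)) * (θ₄ (2 * τ) * θ₂ (2 * τ)) := by
        rw [theta₃_mul_theta₄ hτ, theta₂_sq hτ, thetaChar_one_half_sq hτ]
    _ = 2 * θ₄ (2 * τ) ^ 2 * (θ₃ (2 * τ) * θ₄ (2 * τ)) * θ₂ (2 * τ) ^ 2 := by ring
    _ = 2 * (θ₃ (4 * τ) ^ 2 - θ₂ (4 * τ) ^ 2) * θ₄ (4 * τ) ^ 2 *
          (2 * θ₂ (4 * τ) * θ₃ (4 * τ)) := by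
        rw [theta₄_sq h2τ, theta₃_mul_theta₄ h2τ, theta₂_sq h2τ, h4τ]
    _ = _ := by ring
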